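/- Lower bound on the sandwiched Rains relative entropy of order 1/2 of the maximally entangled state: R̃_{1/2}(Φ^d) = inf_{σ∈PPT'} [−log₂ F(Φ^d, σ)] ≥ log₂ d, where the fidelity F is extended to positive semidefinite σ by the same formula. -/

import Mathlib

open scoped Matrix Classical ComplexOrder

namespace RainsPaper

/-- Natural matrix logarithm of a Hermitian matrix via spectral decomposition
(with the convention `log 0 = 0` on the kernel); junk value `0` otherwise. -/
noncomputable def matLog {n : Type} [Fintype n] [DecidableEq n] (A : Matrix n n ℂ) :
    Matrix n n ℂ :=
  if hA : A.IsHermitian then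
    (hA.eigenvectorUnitary : Matrix n n ℂ) *
      (Matrix.diagonal fun i => (Real.log (hA.eigenvalues i) : ℂ)) *
      (star (hA.eigenvectorUnitary : Matrix n n ℂ))
  else 0

/-- Real power of a Hermitian matrix via spectral decomposition (with the convention
`0 ^ r = 0` for `r ≠ 0`, so negative powers are taken on the support);
junk value `0` otherwise. -/
noncomputable def matPow {n : Type} [Fintype n] [DecidableEq n] (A : Matrix n n ℂ) (r : ℝ) :
    Matrix n n ℂ :=
  if hA : A.IsHermitian then
    (hA.eigenvectorUnitary : Matrix n n ℂ) *
      (Matrix.diagonal fun i => ((hA.eigenvalues i ^ r : ℝ) : ℂ)) *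
      (star (hA.eigenvectorUnitary : Matrix n n ℂ))
  else 0

/-- A state is a positive semidefinite operator with unit trace. -/
def IsState {n : Type} [Fintype n] (ρ : Matrix n n ℂ) : Prop :=
  ρ.PosSemidef ∧ ρ.trace = 1

/-- `supp ω ⊆ supp τ`, expressed (for Hermitian matrices) as `ker τ ⊆ ker ω`. -/
def SuppSubset {n : Type} [Fintype n] (ω τ : Matrix n n ℂ) : Prop :=
  ∀ v : n → ℂ, τ.mulVec v = 0 → ω.mulVec v = 0

/-- Trace norm `‖X‖₁ = Tr √(X†X)`. -/
noncomputable def traceNorm {n : Type} [Fintype n] [DecidableEq n] (X : Matrix n n ℂ) : ℝ :=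
  ((matPow (Xᴴ * X) 2⁻¹).trace).re

/-- Fidelity `F(ω,τ) = ‖√ω √τ‖₁²`. -/
noncomputable def fidelity {n : Type} [Fintype n] [DecidableEq n] (ω τ : Matrix n n ℂ) : ℝ :=
  (traceNorm (matPow ω 2⁻¹ * matPow τ 2⁻¹)) ^ 2

/-- Extended base-2 logarithm: `elog2 x = log₂ x` for `x > 0` and `-∞` for `x ≤ 0`. -/
noncomputable def elog2 (x : ℝ) : EReal :=
  if x ≤ 0 then ⊥ else ((Real.logb 2 x : ℝ) : EReal)

/-- Quantum relative entropy `D(ω‖τ) = Tr[ω (log₂ ω - log₂ τ)]` if `supp ω ⊆ supp τ`,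
and `+∞` otherwise. -/
noncomputable def qRelEnt {n : Type} [Fintype n] [DecidableEq n] (ω τ : Matrix n n ℂ) : EReal :=
  if SuppSubset ω τ then
    ((((ω * (matLog ω - matLog τ)).trace).re / Real.log 2 : ℝ) : EReal)
  else ⊤

/-- Sandwiched Rényi relative entropy
`D̃_α(ω‖τ) = (α-1)⁻¹ log₂ Tr[(τ^{(1-α)/(2α)} ω τ^{(1-α)/(2α)})^α]` when `α ∈ (0,1)`, or
`α > 1` and `supp ω ⊆ supp τ`; `+∞` otherwise. -/
noncomputable def sandRenyi {n : Type} [Fintype n] [DecidableEq n] (α : ℝ)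
    (ω τ : Matrix n n ℂ) : EReal :=
  if (0 < α ∧ α < 1) ∨ (1 < α ∧ SuppSubset ω τ) then
    (((α - 1)⁻¹ : ℝ) : EReal) *
      elog2 (((matPow (matPow τ ((1 - α) / (2 * α)) * ω * matPow τ ((1 - α) / (2 * α))) α).trace).re)
  else ⊤

/-- Petz Rényi relative entropy `D_α(ω‖τ) = (α-1)⁻¹ log₂ Tr[ω^α τ^{1-α}]` when `α ∈ (0,1)`,
or `α > 1` and `supp ω ⊆ supp τ`; `+∞` otherwise. -/
noncomputable def petzRenyi {n : Type} [Fintype n] [DecidableEq n] (α : ℝ)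
    (ω τ : Matrix n n ℂ) : EReal :=
  if (0 < α ∧ α < 1) ∨ (1 < α ∧ SuppSubset ω τ) then
    (((α - 1)⁻¹ : ℝ) : EReal) * elog2 (((matPow ω α * matPow τ (1 - α)).trace).re)
  else ⊤

/-- Geometric Rényi relative entropy `D̂_α(ω‖τ) = (α-1)⁻¹ log₂ Tr[τ (τ^{-1/2} ω τ^{-1/2})^α]`
(inverses on the support) when `α ∈ (0,1)`, or `α > 1` and `supp ω ⊆ supp τ`; `+∞` otherwise. -/
noncomputable def geomRenyi {n : Type} [Fintype n] [DecidableEq n] (α : ℝ)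
    (ω τ : Matrix n n ℂ) : EReal :=
  if (0 < α ∧ α < 1) ∨ (1 < α ∧ SuppSubset ω τ) then
    (((α - 1)⁻¹ : ℝ) : EReal) *
      elog2 (((τ * matPow (matPow τ (-2⁻¹) * ω * matPow τ (-2⁻¹)) α).trace).re)
  else ⊤

/-- Classical relative entropy `D(p‖q)`, equal to `+∞` unless `supp p ⊆ supp q`
(terms with `p x = 0` contribute zero). -/
noncomputable def cRelEnt {X : Type} [Fintype X] (p q : X → ℝ) : EReal :=
  if ∀ x, p x ≠ 0 → q x ≠ 0 then
    ((∑ x, p x * Real.logb 2 (p x / q x) : ℝ) : EReal)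
  else ⊤

/-- `p` is a probability distribution on the finite set `X`. -/
def IsProb {X : Type} [Fintype X] (p : X → ℝ) : Prop :=
  (∀ x, 0 ≤ p x) ∧ ∑ x, p x = 1

/-- The classical–quantum operator `∑ x p(x) |x⟩⟨x| ⊗ K x`. -/
noncomputable def cqOp {X A : Type} [DecidableEq X] (p : X → ℝ)
    (K : X → Matrix A A ℂ) : Matrix (X × A) (X × A) ℂ :=
  Matrix.of fun a b => if a.1 = b.1 then (p a.1 : ℂ) * K a.1 a.2 b.2 else 0

/-- Partial transpose (on the second tensor factor):
`(id ⊗ T)(X)_{(i,k),(j,l)} = X_{(i,l),(j,k)}`. -/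
def ptrans {a b : Type} (X : Matrix (a × b) (a × b) ℂ) : Matrix (a × b) (a × b) ℂ :=
  Matrix.of fun p q => X (p.1, q.2) (q.1, p.2)

/-- The partial transpose as a linear map. -/
def ptransL {a b : Type} : Matrix (a × b) (a × b) ℂ →ₗ[ℂ] Matrix (a × b) (a × b) ℂ where
  toFun := ptrans
  map_add' _ _ := rfl
  map_smul' _ _ := rfl

/-- `PPT'` : positive semidefinite bipartite operators whose partial transpose has
trace norm at most 1. -/
def PPTprime {a b : Type} [Fintype a] [Fintype b] [DecidableEq a] [DecidableEq b]
    (σ : Matrix (a × b) (a × b) ℂ) : Prop :=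
  σ.PosSemidef ∧ traceNorm (ptrans σ) ≤ 1

/-- The Rains relative entropy `R(ρ) = inf_{σ ∈ PPT'} D(ρ‖σ)`. -/
noncomputable def Rains {a b : Type} [Fintype a] [Fintype b] [DecidableEq a] [DecidableEq b]
    (ρ : Matrix (a × b) (a × b) ℂ) : EReal :=
  ⨅ σ : {σ : Matrix (a × b) (a × b) ℂ // PPTprime σ}, qRelEnt ρ σ.1

/-- The sandwiched Rényi Rains relative entropy `R̃_α(ρ) = inf_{σ ∈ PPT'} D̃_α(ρ‖σ)`. -/
noncomputable def sandRains {a b : Type} [Fintype a] [Fintype b] [DecidableEq a] [DecidableEq b]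
    (α : ℝ) (ρ : Matrix (a × b) (a × b) ℂ) : EReal :=
  ⨅ σ : {σ : Matrix (a × b) (a × b) ℂ // PPTprime σ}, sandRenyi α ρ σ.1

/-- The extension `id_{Fin k} ⊗ Φ` of a linear map on matrices. -/
def matExt {n m : Type} [Fintype n] [Fintype m]
    (Φ : Matrix n n ℂ →ₗ[ℂ] Matrix m m ℂ) (k : ℕ)
    (X : Matrix (Fin k × n) (Fin k × n) ℂ) : Matrix (Fin k × m) (Fin k × m) ℂ :=
  Matrix.of fun p q => Φ (Matrix.of fun i j => X (p.1, i) (q.1, j)) p.2 q.2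

/-- Complete positivity: all extensions `id_k ⊗ Φ` preserve positive semidefiniteness. -/
def IsCP {n m : Type} [Fintype n] [Fintype m]
    (Φ : Matrix n n ℂ →ₗ[ℂ] Matrix m m ℂ) : Prop :=
  ∀ (k : ℕ) (X : Matrix (Fin k × n) (Fin k × n) ℂ), X.PosSemidef → (matExt Φ k X).PosSemidef

/-- Trace preservation. -/
def IsTP {n m : Type} [Fintype n] [Fintype m]
    (Φ : Matrix n n ℂ →ₗ[ℂ] Matrix m m ℂ) : Prop :=
  ∀ X : Matrix n n ℂ, (Φ X).trace = X.trace

/-- A selective PPT operation: a family of completely positive maps `P x` such that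
`(id ⊗ T) ∘ P x ∘ (id ⊗ T)` is completely positive for every `x` and `∑ x, P x` is
trace preserving. -/
def IsSelectivePPT {a b a' b' X : Type} [Fintype a] [Fintype b] [Fintype a'] [Fintype b']
    [Fintype X]
    (P : X → (Matrix (a × b) (a × b) ℂ →ₗ[ℂ] Matrix (a' × b') (a' × b') ℂ)) : Prop :=
  (∀ x, IsCP (P x)) ∧ (∀ x, IsCP (ptransL ∘ₗ P x ∘ₗ ptransL)) ∧
    (∀ ρ : Matrix (a × b) (a × b) ℂ, ∑ x, ((P x) ρ).trace = ρ.trace)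

/-- The maximally entangled state `Φ^d = |Φ^d⟩⟨Φ^d|`, `|Φ^d⟩ = d^{-1/2} ∑ i |i⟩|i⟩`. -/
noncomputable def maxEnt (d : ℕ) : Matrix (Fin d × Fin d) (Fin d × Fin d) ℂ :=
  Matrix.of fun p q => if p.1 = p.2 ∧ q.1 = q.2 then ((d : ℂ))⁻¹ else 0

/-- Binary entropy `h₂(ε) = -ε log₂ ε - (1-ε) log₂ (1-ε)`. -/
noncomputable def h2 (ε : ℝ) : ℝ :=
  -ε * Real.logb 2 ε - (1 - ε) * Real.logb 2 (1 - ε)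

/-!
For positive semidefinite `ω, τ` one has `(√ω √τ)ᴴ (√ω √τ) = √τ ω √τ`, so at `α = 1/2` the
sandwiched Rényi divergence is `-2 log₂ ‖√ω √τ‖₁ = -log₂ F(ω, τ)`, which gives the equality.
Since `Φ^d` is pure, `Φ^d X Φ^d = Tr[Φ^d X] Φ^d`; hence `√σ Φ^d √σ` squares to `Tr[Φ^d σ]` times
itself, its square root has trace `√Tr[Φ^d σ]`, and `F(Φ^d, σ) = Tr[Φ^d σ]`. The partial transpose
preserves `Tr[A B]` and maps `Φ^d` to `S / d`, `S` the (unitary) swap, so for `σ ∈ PPT'`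
`Tr[Φ^d σ] = Tr[S σ^Γ] / d ≤ ‖σ^Γ‖₁ / d ≤ 1 / d`.
-/

open scoped MatrixOrder

section MatPow
variable {n : Type} [Fintype n] [DecidableEq n]

lemma matPow_eq_cfc {A : Matrix n n ℂ} (hA : A.IsHermitian) (r : ℝ) :
    matPow A r = cfc (· ^ r : ℝ → ℝ) A := by
  rw [hA.cfc_eq, matPow, dif_pos hA, Matrix.IsHermitian.cfc, Unitary.conjStarAlgAut_apply]
  rfl

lemma matPow_half_eq_sqrt {A : Matrix n n ℂ} (hA : A.PosSemidef) :
    matPow A 2⁻¹ = CFC.sqrt A := by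
  rw [CFC.sqrt_eq_real_sqrt A hA.nonneg, cfcₙ_eq_cfc, matPow_eq_cfc hA.1]
  congr 1
  funext x
  rw [Real.sqrt_eq_rpow, one_div]

lemma posSemidef_matPow_half {A : Matrix n n ℂ} (hA : A.PosSemidef) :
    (matPow A 2⁻¹).PosSemidef := by
  rw [matPow_half_eq_sqrt hA, ← Matrix.nonneg_iff_posSemidef]
  exact CFC.sqrt_nonneg A

lemma matPow_half_mul_self {A : Matrix n n ℂ} (hA : A.PosSemidef) :
    matPow A 2⁻¹ * matPow A 2⁻¹ = A := by
  rw [matPow_half_eq_sqrt hA]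
  exact CFC.sqrt_mul_sqrt_self A hA.nonneg

lemma matPow_half_eq_of_mul_self_eq {A S : Matrix n n ℂ} (hA : A.PosSemidef) (hS : S.PosSemidef)
    (h : S * S = A) : matPow A 2⁻¹ = S := by
  rw [matPow_half_eq_sqrt hA]
  exact CFC.sqrt_unique h hS.nonneg

lemma trace_matPow_half_of_mul_self_eq_trace_smul {M : Matrix n n ℂ} (hM : M.PosSemidef)
    (h : M * M = M.trace • M) : (matPow M 2⁻¹).trace = √M.trace.re := by
  obtain ⟨c, hc, hcM⟩ : ∃ c : ℝ, 0 ≤ c ∧ M.trace = c :=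
    ⟨M.trace.re, by simpa using Complex.re_le_re hM.trace_nonneg,
      (Complex.ext_iff.mpr ⟨rfl, by simpa using (Complex.le_def.mp hM.trace_nonneg).2.symm⟩)⟩
  rw [hcM, Complex.ofReal_re]
  rcases hc.eq_or_lt with rfl | hc
  · obtain rfl : M = 0 := hM.trace_eq_zero_iff.mp (by simpa using hcM)
    rw [matPow_half_eq_of_mul_self_eq hM .zero (mul_zero 0)]
    simp
  have hsc : (√c : ℂ) ≠ 0 := by exact_mod_cast (Real.sqrt_pos.mpr hc).ne'
  have hcc : (c : ℂ) = √c * √c := by exact_mod_cast (Real.mul_self_sqrt hc.le).symm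
  have hS : ((√c : ℂ)⁻¹ • M).PosSemidef :=
    hM.smul (by exact_mod_cast inv_nonneg.mpr (Real.sqrt_nonneg c))
  rw [matPow_half_eq_of_mul_self_eq hM hS, Matrix.trace_smul, hcM, smul_eq_mul, hcc,
    inv_mul_cancel_left₀ hsc]
  rw [smul_mul_smul_comm, h, hcM, hcc, smul_smul, ← mul_inv,
    inv_mul_cancel₀ (mul_ne_zero hsc hsc), one_smul]

end MatPow

section Fidelity
variable {n : Type} [Fintype n] [DecidableEq n]

lemma traceNorm_matPow_half_mul_matPow_half {ω τ : Matrix n n ℂ} (hω : ω.PosSemidef)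
    (hτ : τ.PosSemidef) :
    traceNorm (matPow ω 2⁻¹ * matPow τ 2⁻¹) =
      (matPow (matPow τ 2⁻¹ * ω * matPow τ 2⁻¹) 2⁻¹).trace.re := by
  rw [traceNorm, Matrix.conjTranspose_mul, (posSemidef_matPow_half hω).1.eq,
    (posSemidef_matPow_half hτ).1.eq, mul_assoc, ← mul_assoc (matPow ω 2⁻¹),
    matPow_half_mul_self hω, ← mul_assoc]

lemma posSemidef_matPow_half_mul_mul {ω τ : Matrix n n ℂ} (hω : ω.PosSemidef)
    (hτ : τ.PosSemidef) : (matPow τ 2⁻¹ * ω * matPow τ 2⁻¹).PosSemidef := by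
  simpa [(posSemidef_matPow_half hτ).1.eq] using
    hω.mul_mul_conjTranspose_same (matPow τ 2⁻¹)

lemma coe_neg_two_mul_elog2 {t : ℝ} (ht : 0 ≤ t) :
    ((-2 : ℝ) : EReal) * elog2 t = -elog2 (t ^ 2) := by
  rcases ht.eq_or_lt with rfl | ht
  · rw [elog2, elog2, if_pos le_rfl, if_pos (by norm_num),
      EReal.coe_mul_bot_of_neg (by norm_num), EReal.neg_bot]
  · rw [elog2, elog2, if_neg ht.not_ge, if_neg (pow_pos ht 2).not_ge, ← EReal.coe_mul,
      ← EReal.coe_neg, Real.logb_pow]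
    norm_num

lemma sandRenyi_half_eq_neg_elog2_fidelity {ω τ : Matrix n n ℂ} (hω : ω.PosSemidef)
    (hτ : τ.PosSemidef) : sandRenyi 2⁻¹ ω τ = -elog2 (fidelity ω τ) := by
  have hM := posSemidef_matPow_half_mul_mul hω hτ
  rw [sandRenyi, if_pos (Or.inl (by norm_num)), fidelity,
    traceNorm_matPow_half_mul_matPow_half hω hτ, ← coe_neg_two_mul_elog2]
  · norm_num
  · simpa using Complex.re_le_re (posSemidef_matPow_half hM).trace_nonneg

lemma fidelity_eq_re_trace_mul_of_mul_mul_self {P τ : Matrix n n ℂ} (hP : P.PosSemidef)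
    (hpure : ∀ X, P * X * P = (P * X).trace • P) (hτ : τ.PosSemidef) :
    fidelity P τ = (P * τ).trace.re := by
  have hM := posSemidef_matPow_half_mul_mul hP hτ
  set R := matPow τ 2⁻¹
  have hRR : R * R = τ := matPow_half_mul_self hτ
  have htr : (R * P * R).trace = (P * τ).trace := by
    rw [Matrix.trace_mul_cycle, hRR, Matrix.trace_mul_comm]
  have hsq : (R * P * R) * (R * P * R) = (R * P * R).trace • (R * P * R) := by
    calc (R * P * R) * (R * P * R) = R * (P * (R * R) * P) * R := by simp only [mul_assoc]
      _ = (R * P * R).trace • (R * P * R) := by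
        rw [hRR, hpure, htr, Matrix.mul_smul, Matrix.smul_mul]
  rw [fidelity, traceNorm_matPow_half_mul_matPow_half hP hτ,
    trace_matPow_half_of_mul_self_eq_trace_smul hM hsq, Complex.ofReal_re, htr,
    Real.sq_sqrt]
  simpa [htr] using Complex.re_le_re hM.trace_nonneg

end Fidelity

section TraceNorm
variable {n : Type} [Fintype n] [DecidableEq n]

lemma traceNorm_eq_re_trace_abs (X : Matrix n n ℂ) : traceNorm X = (CFC.abs X).trace.re := by
  rw [traceNorm, matPow_half_eq_sqrt (Matrix.posSemidef_conjTranspose_mul_self X)]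
  rfl

lemma re_trace_mul_diagonal_le {W : Matrix n n ℂ} (hW : W ∈ Matrix.unitaryGroup n ℂ)
    (f : n → ℝ) : (W * Matrix.diagonal (fun i => (f i : ℂ))).trace.re ≤ ∑ i, |f i| := by
  simp only [Matrix.trace, Matrix.diag, Matrix.mul_diagonal, Complex.re_sum]
  gcongr with i
  calc (W i i * f i).re ≤ ‖W i i * f i‖ := Complex.re_le_norm _
    _ = ‖W i i‖ * |f i| := by rw [norm_mul, Complex.norm_real, Real.norm_eq_abs]
    _ ≤ |f i| := mul_le_of_le_one_left (abs_nonneg _) (entry_norm_bound_of_unitary hW i i)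

lemma re_trace_unitary_mul_le_traceNorm {U τ : Matrix n n ℂ}
    (hU : U ∈ Matrix.unitaryGroup n ℂ) (hτ : τ.IsHermitian) :
    (U * τ).trace.re ≤ traceNorm τ := by
  set V := (hτ.eigenvectorUnitary : Matrix n n ℂ)
  have hV : V ∈ Matrix.unitaryGroup n ℂ := hτ.eigenvectorUnitary.2
  have hτV : τ = V * Matrix.diagonal (fun i => (hτ.eigenvalues i : ℂ)) * star V := by
    conv_lhs => rw [hτ.spectral_theorem]
    rfl
  have habs :
      CFC.abs τ = V * Matrix.diagonal (fun i => ((|hτ.eigenvalues i| : ℝ) : ℂ)) * star V := by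
    rw [CFC.abs_eq_cfc_norm τ hτ.isSelfAdjoint, hτ.cfc_eq, Matrix.IsHermitian.cfc,
      Unitary.conjStarAlgAut_apply]
    simp [Function.comp_def, Real.norm_eq_abs, V]
  have hW : star V * U * V ∈ Matrix.unitaryGroup n ℂ :=
    mul_mem (mul_mem (Unitary.star_mem hV) hU) hV
  calc (U * τ).trace.re
      = (star V * U * V * Matrix.diagonal (fun i => (hτ.eigenvalues i : ℂ))).trace.re := by
        conv_lhs => rw [hτV, ← mul_assoc, ← mul_assoc, Matrix.trace_mul_comm]
        simp only [mul_assoc]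
    _ ≤ ∑ i, |hτ.eigenvalues i| := re_trace_mul_diagonal_le hW _
    _ = traceNorm τ := by
        rw [traceNorm_eq_re_trace_abs, habs, Matrix.trace_mul_cycle,
          Matrix.mem_unitaryGroup_iff'.mp hV, one_mul, Matrix.trace_diagonal]
        simp

lemma permMatrix_mem_unitaryGroup (σ : Equiv.Perm n) :
    σ.permMatrix ℂ ∈ Matrix.unitaryGroup n ℂ := by
  rw [Matrix.mem_unitaryGroup_iff', Matrix.star_eq_conjTranspose, Matrix.conjTranspose_permMatrix,
    ← Matrix.permMatrix_mul, mul_inv_cancel, Matrix.permMatrix_one]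

end TraceNorm

lemma smul_vecMulVec_mul_mul_self {n R : Type} [Fintype n] [CommRing R] (c : R) (v w : n → R)
    (X : Matrix n n R) :
    c • Matrix.vecMulVec v w * X * (c • Matrix.vecMulVec v w) =
      (c • Matrix.vecMulVec v w * X).trace • (c • Matrix.vecMulVec v w) := by
  rw [Matrix.smul_mul, Matrix.trace_smul, Matrix.vecMulVec_mul, Matrix.smul_mul, Matrix.mul_smul,
    Matrix.vecMulVec_mul_vecMulVec, Matrix.trace_vecMulVec, Matrix.vecMulVec_smul, smul_smul,
    smul_smul, smul_eq_mul, dotProduct_comm, smul_smul]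
  ring_nf

section PartialTranspose
variable {a b : Type}

lemma isHermitian_ptrans {σ : Matrix (a × b) (a × b) ℂ} (hσ : σ.IsHermitian) :
    (ptrans σ).IsHermitian := by
  ext p q
  simpa [ptrans] using congr_fun₂ hσ (p.1, q.2) (q.1, p.2)

lemma trace_ptrans_mul_ptrans [Fintype a] [Fintype b] (A B : Matrix (a × b) (a × b) ℂ) :
    (ptrans A * ptrans B).trace = (A * B).trace := by
  simp only [Matrix.trace, Matrix.diag, Matrix.mul_apply, ptrans, Matrix.of_apply]
  rw [← Fintype.sum_prod_type', ← Fintype.sum_prod_type']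
  exact Fintype.sum_equiv (Function.Involutive.toPerm
    (fun x : (a × b) × (a × b) => ((x.1.1, x.2.2), (x.2.1, x.1.2))) fun _ => rfl)
    _ _ fun _ => rfl

end PartialTranspose

section MaxEnt
variable (d : ℕ)

lemma maxEnt_eq_smul_vecMulVec :
    maxEnt d = (((d : ℝ)⁻¹ : ℝ) : ℂ) •
      Matrix.vecMulVec (fun p : Fin d × Fin d => if p.1 = p.2 then 1 else 0)
        (star fun p : Fin d × Fin d => if p.1 = p.2 then 1 else 0) := by
  ext p q
  by_cases hp : p.1 = p.2 <;> by_cases hq : q.1 = q.2 <;>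
    simp [maxEnt, Matrix.vecMulVec_apply, hp, hq]

lemma posSemidef_maxEnt : (maxEnt d).PosSemidef := by
  rw [maxEnt_eq_smul_vecMulVec]
  exact (Matrix.posSemidef_vecMulVec_self_star _).smul
    (Complex.zero_le_real.mpr (inv_nonneg.mpr d.cast_nonneg))

lemma maxEnt_mul_mul_maxEnt (X : Matrix (Fin d × Fin d) (Fin d × Fin d) ℂ) :
    maxEnt d * X * maxEnt d = (maxEnt d * X).trace • maxEnt d := by
  rw [maxEnt_eq_smul_vecMulVec]
  exact smul_vecMulVec_mul_mul_self _ _ _ X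

lemma fidelity_maxEnt {σ : Matrix (Fin d × Fin d) (Fin d × Fin d) ℂ} (hσ : σ.PosSemidef) :
    fidelity (maxEnt d) σ = (maxEnt d * σ).trace.re :=
  fidelity_eq_re_trace_mul_of_mul_mul_self (posSemidef_maxEnt d) (maxEnt_mul_mul_maxEnt d) hσ

lemma ptrans_maxEnt :
    ptrans (maxEnt d) = (((d : ℝ)⁻¹ : ℝ) : ℂ) •
      Equiv.Perm.permMatrix ℂ (Equiv.prodComm (Fin d) (Fin d)) := by
  ext p q
  by_cases h1 : p.1 = q.2 <;> by_cases h2 : q.1 = p.2 <;>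
    simp [ptrans, maxEnt, PEquiv.toMatrix_apply, Prod.ext_iff, eq_comm, h1, h2]

variable {d} in
lemma re_trace_maxEnt_mul_le {σ : Matrix (Fin d × Fin d) (Fin d × Fin d) ℂ}
    (hσ : PPTprime σ) :
    (maxEnt d * σ).trace.re ≤ (d : ℝ)⁻¹ :=
  calc (maxEnt d * σ).trace.re
      = (d : ℝ)⁻¹ *
          (Equiv.Perm.permMatrix ℂ (Equiv.prodComm (Fin d) (Fin d)) * ptrans σ).trace.re := by
        rw [← trace_ptrans_mul_ptrans, ptrans_maxEnt, Matrix.smul_mul, Matrix.trace_smul,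
          smul_eq_mul, Complex.re_ofReal_mul]
    _ ≤ (d : ℝ)⁻¹ * traceNorm (ptrans σ) := by
        gcongr
        exact re_trace_unitary_mul_le_traceNorm (permMatrix_mem_unitaryGroup _)
          (isHermitian_ptrans hσ.1.1)
    _ ≤ (d : ℝ)⁻¹ := mul_le_of_le_one_right (by positivity) hσ.2

end MaxEnt

lemma coe_logb_le_neg_elog2 {x c : ℝ} (h : c ≤ x⁻¹) :
    ((Real.logb 2 x : ℝ) : EReal) ≤ -elog2 c := by
  rcases le_or_gt c 0 with hc | hc
  · simp [elog2, hc]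
  · rw [elog2, if_neg hc.not_ge, ← EReal.coe_neg, EReal.coe_le_coe_iff, le_neg,
      ← Real.logb_inv]
    exact Real.logb_le_logb_of_le (by norm_num) hc h

theorem sandRains_half_maxEnt_general {d : ℕ} :
    sandRains (a := Fin d) (b := Fin d) 2⁻¹ (maxEnt d) =
        (⨅ σ : {σ : Matrix (Fin d × Fin d) (Fin d × Fin d) ℂ // PPTprime σ},
          -(elog2 (fidelity (maxEnt d) σ.1)))
      ∧ ((Real.logb 2 d : ℝ) : EReal) ≤ sandRains (a := Fin d) (b := Fin d) 2⁻¹ (maxEnt d) := by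
  have hsand : ∀ σ : {σ : Matrix (Fin d × Fin d) (Fin d × Fin d) ℂ // PPTprime σ},
      sandRenyi 2⁻¹ (maxEnt d) σ.1 = -(elog2 (fidelity (maxEnt d) σ.1)) := fun σ =>
    sandRenyi_half_eq_neg_elog2_fidelity (posSemidef_maxEnt d) σ.2.1
  refine ⟨iInf_congr hsand, le_iInf fun σ => ?_⟩
  rw [hsand, fidelity_maxEnt d σ.2.1]
  exact coe_logb_le_neg_elog2 (re_trace_maxEnt_mul_le σ.2)

/-- Lower bound on the sandwiched Rains relative entropy of order
`1/2` of the maximally entangled state: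
`R̃_{1/2}(Φ^d) = inf_{σ ∈ PPT'} [-log₂ F(Φ^d, σ)] ≥ log₂ d`
(with `log₂ 0 = -∞`, so that `-log₂ 0 = +∞`). -/
theorem sandRains_half_maxEnt {d : ℕ} (hd : 1 ≤ d) :
    sandRains (a := Fin d) (b := Fin d) 2⁻¹ (maxEnt d) =
        (⨅ σ : {σ : Matrix (Fin d × Fin d) (Fin d × Fin d) ℂ // PPTprime σ},
          -(elog2 (fidelity (maxEnt d) σ.1)))
      ∧ ((Real.logb 2 d : ℝ) : EReal) ≤ sandRains (a := Fin d) (b := Fin d) 2⁻¹ (maxEnt d) :=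
  sandRains_half_maxEnt_general

end RainsPaper
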